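/- arXiv:2601.01771 — 2 statements merged into one kernel-verified Lean document; each statement's English description precedes it below -/
import Mathlib

section
/- The subgroup of GL(3,ℝ) generated by the matrices τ₂, δ and ρ is isomorphic to the symmetric group S₄ (the group of permutations of a four-element set). -/
open Matrix

/-- The matrix representing the automorphism δ of `V_{L₂}`. -/
noncomputable def δ : GL (Fin 3) ℝ :=
  Matrix.GeneralLinearGroup.mkOfDetNeZero !![0,1,0; 0,0,-1; -1,0,0]
    (by norm_num [Matrix.det_fin_three, Matrix.cons_val_two, Matrix.vecHead, Matrix.vecTail])

/-- The matrix representing the automorphism τ₁ of `V_{L₂}`. -/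
noncomputable def τ₁ : GL (Fin 3) ℝ :=
  Matrix.GeneralLinearGroup.mkOfDetNeZero !![1,0,0; 0,-1,0; 0,0,-1]
    (by norm_num [Matrix.det_fin_three, Matrix.cons_val_two, Matrix.vecHead, Matrix.vecTail])

/-- The matrix representing the automorphism τ₂ of `V_{L₂}`. -/
noncomputable def τ₂ : GL (Fin 3) ℝ :=
  Matrix.GeneralLinearGroup.mkOfDetNeZero !![-1,0,0; 0,1,0; 0,0,-1]
    (by norm_num [Matrix.det_fin_three, Matrix.cons_val_two, Matrix.vecHead, Matrix.vecTail])

/-- The matrix representing the automorphism ρ of `V_{L₂}`. -/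
noncomputable def ρ : GL (Fin 3) ℝ :=
  Matrix.GeneralLinearGroup.mkOfDetNeZero !![-1,0,0; 0,0,1; 0,1,0]
    (by norm_num [Matrix.det_fin_three, Matrix.cons_val_two, Matrix.vecHead, Matrix.vecTail])

/-!
The rotation group of the cube acts faithfully on its four diagonals, and this identifies it
with `S₄`. Concretely, the columns of `V = cubeDiagonals` represent the diagonals. Its rows span
the sum-zero hyperplane of `ℝ⁴`, so compressing the permutation matrices `P σ` gives the
standard representation `σ ↦ V * P σ * Vᵀ / 4`; twisting it by the sign turns its reflections
into rotations. The result is faithful because no two columns of `V` are proportional, and it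
maps `(0 2)(1 3)`, `(0 1 2)` and `(0 1)`, which generate `S₄`, to `τ₂`, `δ` and `ρ`.
-/

open Equiv Equiv.Perm

namespace MonoidHom

variable {M A R m n : Type*} [Monoid M]

@[simps]
def twist [CommSemiring R] [Semiring A] [Algebra R A] (χ : M →* R) (f : M →* A) : M →* A where
  toFun g := χ g • f g
  map_one' := by simp
  map_mul' g h := by simp only [map_mul, smul_mul_smul_comm]

variable [Fintype m] [Fintype n] [DecidableEq m] [DecidableEq n] [Semiring R]

/-- `hW` says that the image of `W` is `P`-invariant, `W * V` being a projection onto it. -/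
@[simps]
def compressMatrix (P : M →* Matrix n n R) (V : Matrix m n R) (W : Matrix n m R)
    (hVW : V * W = 1) (hW : ∀ g, W * V * P g * W = P g * W) : M →* Matrix m m R where
  toFun g := V * P g * W
  map_one' := by rw [map_one, Matrix.mul_one, hVW]
  map_mul' g h := by
    calc V * P (g * h) * W = V * P g * (P h * W) := by rw [map_mul]; simp only [Matrix.mul_assoc]
      _ = V * P g * (W * V * P h * W) := by rw [hW]
      _ = V * P g * W * (V * P h * W) := by simp only [Matrix.mul_assoc]

end MonoidHom

section Ones

variable {n R : Type*} [Fintype n] [DecidableEq n] [NonAssocSemiring R]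

lemma permMatrixHom_mul_ones (σ : Perm n) :
    permMatrixHom σ * Matrix.of (fun _ _ => (1 : R)) = Matrix.of fun _ _ => (1 : R) := by
  rw [permMatrixHom_apply, PEquiv.toMatrix_toPEquiv_mul]
  rfl

lemma ones_mul_permMatrixHom (σ : Perm n) :
    Matrix.of (fun _ _ => (1 : R)) * permMatrixHom σ = Matrix.of fun _ _ => (1 : R) := by
  rw [permMatrixHom_apply, PEquiv.mul_toMatrix_toPEquiv]
  rfl

end Ones

def cubeDiagonals : Matrix (Fin 3) (Fin 4) ℝ := !![1, 1, -1, -1; 1, -1, 1, -1; 1, -1, -1, 1]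

noncomputable def cubeDiagonalsRightInv : Matrix (Fin 4) (Fin 3) ℝ := (4 : ℝ)⁻¹ • cubeDiagonalsᵀ

lemma cubeDiagonals_mul_rightInv : cubeDiagonals * cubeDiagonalsRightInv = 1 := by
  ext i j
  fin_cases i <;> fin_cases j <;>
    norm_num [cubeDiagonals, cubeDiagonalsRightInv, Matrix.mul_apply, Fin.sum_univ_succ]

lemma rightInv_mul_cubeDiagonals :
    cubeDiagonalsRightInv * cubeDiagonals = 1 - (4 : ℝ)⁻¹ • Matrix.of fun _ _ => 1 := by
  ext i j
  fin_cases i <;> fin_cases j <;>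
    norm_num [cubeDiagonals, cubeDiagonalsRightInv, Matrix.mul_apply, Fin.sum_univ_succ]

lemma cubeDiagonals_mul_ones :
    cubeDiagonals * (Matrix.of fun _ _ => 1 : Matrix (Fin 4) (Fin 4) ℝ) = 0 := by
  ext i j
  fin_cases i <;> simp [cubeDiagonals, Matrix.mul_apply, Fin.sum_univ_succ]

lemma ones_mul_rightInv :
    (Matrix.of fun _ _ => 1 : Matrix (Fin 4) (Fin 4) ℝ) * cubeDiagonalsRightInv = 0 := by
  ext i j
  fin_cases j <;> simp [cubeDiagonalsRightInv, cubeDiagonals, Matrix.mul_apply, Fin.sum_univ_succ]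

lemma rightInv_cubeDiagonals_permMatrixHom_rightInv (σ : Perm (Fin 4)) :
    cubeDiagonalsRightInv * cubeDiagonals * permMatrixHom (R := ℝ) σ * cubeDiagonalsRightInv =
      permMatrixHom (R := ℝ) σ * cubeDiagonalsRightInv := by
  rw [rightInv_mul_cubeDiagonals, Matrix.sub_mul, Matrix.sub_mul, Matrix.one_mul,
    Matrix.smul_mul, Matrix.smul_mul, ones_mul_permMatrixHom, ones_mul_rightInv, smul_zero,
    sub_zero]

noncomputable def cubeRotationRep : Perm (Fin 4) →* GL (Fin 3) ℝ :=
  MonoidHom.toHomUnits <| MonoidHom.twist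
    ((Int.castRingHom ℝ : ℤ →* ℝ).comp ((Units.coeHom ℤ).comp sign))
    (MonoidHom.compressMatrix permMatrixHom cubeDiagonals cubeDiagonalsRightInv
      cubeDiagonals_mul_rightInv rightInv_cubeDiagonals_permMatrixHom_rightInv)

lemma cubeRotationRep_mul_cubeDiagonals (σ : Perm (Fin 4)) :
    (cubeRotationRep σ : Matrix (Fin 3) (Fin 3) ℝ) * cubeDiagonals =
      ((sign σ : ℤ) : ℝ) • cubeDiagonals.submatrix id σ := by
  have hV : cubeDiagonals * permMatrixHom (R := ℝ) σ = cubeDiagonals.submatrix id σ := by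
    rw [permMatrixHom_apply, PEquiv.mul_toMatrix_toPEquiv, Perm.inv_def, symm_symm]
  simp only [cubeRotationRep, MonoidHom.coe_toHomUnits, MonoidHom.twist_apply,
    MonoidHom.compressMatrix_apply]
  rw [Matrix.smul_mul, Matrix.mul_assoc _ cubeDiagonalsRightInv, rightInv_mul_cubeDiagonals,
    Matrix.mul_sub, Matrix.mul_one, Matrix.mul_smul, Matrix.mul_assoc cubeDiagonals,
    permMatrixHom_mul_ones, cubeDiagonals_mul_ones, smul_zero, sub_zero, hV]
  rfl

lemma cubeRotationRep_eq_of_mul_cubeDiagonals {σ : Perm (Fin 4)} {g : GL (Fin 3) ℝ}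
    (h : (g : Matrix (Fin 3) (Fin 3) ℝ) * cubeDiagonals =
      ((sign σ : ℤ) : ℝ) • cubeDiagonals.submatrix id σ) :
    cubeRotationRep σ = g := by
  ext1
  calc (cubeRotationRep σ : Matrix (Fin 3) (Fin 3) ℝ)
      = (cubeRotationRep σ : Matrix (Fin 3) (Fin 3) ℝ) * cubeDiagonals *
          cubeDiagonalsRightInv := by
        rw [Matrix.mul_assoc, cubeDiagonals_mul_rightInv, Matrix.mul_one]
    _ = (g : Matrix (Fin 3) (Fin 3) ℝ) * cubeDiagonals * cubeDiagonalsRightInv := by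
        rw [cubeRotationRep_mul_cubeDiagonals, h]
    _ = g := by rw [Matrix.mul_assoc, cubeDiagonals_mul_rightInv, Matrix.mul_one]

lemma cubeRotationRep_swap_zero_one : cubeRotationRep (swap 0 1) = ρ := by
  apply cubeRotationRep_eq_of_mul_cubeDiagonals
  have hsign : sign (swap (0 : Fin 4) 1) = -1 := by decide
  ext i j
  fin_cases i <;> fin_cases j <;>
    simp [ρ, cubeDiagonals, hsign, Matrix.mul_apply, Fin.sum_univ_succ, swap_apply_def]

lemma cubeRotationRep_swap_zero_two_mul_swap_one_three :
    cubeRotationRep (swap 0 2 * swap 1 3) = τ₂ := by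
  apply cubeRotationRep_eq_of_mul_cubeDiagonals
  have hsign : sign (swap (0 : Fin 4) 2 * swap 1 3) = 1 := by decide
  ext i j
  fin_cases i <;> fin_cases j <;>
    simp [τ₂, cubeDiagonals, hsign, Matrix.mul_apply, Fin.sum_univ_succ, swap_apply_def]

lemma cubeRotationRep_swap_zero_one_mul_swap_one_two :
    cubeRotationRep (swap 0 1 * swap 1 2) = δ := by
  apply cubeRotationRep_eq_of_mul_cubeDiagonals
  have hsign : sign (swap (0 : Fin 4) 1 * swap 1 2) = 1 := by decide
  ext i j
  fin_cases i <;> fin_cases j <;>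
    simp [δ, cubeDiagonals, hsign, Matrix.mul_apply, Fin.sum_univ_succ, swap_apply_def]

lemma cubeDiagonals_col_eq {ε : ℤˣ} {i j : Fin 4}
    (h : ∀ k, cubeDiagonals k i = (ε : ℝ) * cubeDiagonals k j) : i = j := by
  have hrows := And.intro (h 0) (And.intro (h 1) (h 2))
  revert hrows
  rcases Int.units_eq_one_or ε with rfl | rfl <;>
    fin_cases i <;> fin_cases j <;> simp [cubeDiagonals] <;> norm_num

lemma cubeRotationRep_injective : Function.Injective cubeRotationRep := by
  rw [injective_iff_map_eq_one]
  intro σ hσ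
  have hV := cubeRotationRep_mul_cubeDiagonals σ
  rw [hσ, Units.val_one, Matrix.one_mul] at hV
  ext j : 1
  exact (cubeDiagonals_col_eq fun k => congrFun (congrFun hV k) j).symm

lemma closure_swap_mul_swap_eq_top :
    Subgroup.closure {swap 0 2 * swap 1 3, swap 0 1 * swap 1 2, swap (0 : Fin 4) 1} = ⊤ := by
  have hrot : finRotate 4 = swap 0 1 * (swap 0 2 * swap 1 3) * (swap 0 1 * swap 1 2)⁻¹ := by
    decide
  have hswap : swap 0 (finRotate 4 0) = swap (0 : Fin 4) 1 := by decide
  rw [eq_top_iff, ← closure_cycle_adjacent_swap isCycle_finRotate support_finRotate 0, hswap,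
    Subgroup.closure_le]
  rintro _ (rfl | rfl)
  · rw [hrot]
    exact mul_mem (mul_mem (Subgroup.subset_closure (by simp)) (Subgroup.subset_closure (by simp)))
      (inv_mem (Subgroup.subset_closure (by simp)))
  · exact Subgroup.subset_closure (by simp)

lemma range_cubeRotationRep : cubeRotationRep.range = Subgroup.closure {τ₂, δ, ρ} := by
  rw [MonoidHom.range_eq_map, ← closure_swap_mul_swap_eq_top, MonoidHom.map_closure,
    Set.image_insert_eq, Set.image_insert_eq, Set.image_singleton,
    cubeRotationRep_swap_zero_two_mul_swap_one_three,
    cubeRotationRep_swap_zero_one_mul_swap_one_two, cubeRotationRep_swap_zero_one]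

/-- The subgroup of GL(3,ℝ) generated by τ₂, δ and ρ is isomorphic to the
symmetric group S₄. -/
theorem subgroup_closure_tau2_delta_rho_iso_S4 :
    Nonempty ((Subgroup.closure {τ₂, δ, ρ} : Subgroup (GL (Fin 3) ℝ)) ≃* Equiv.Perm (Fin 4)) :=
  ⟨(MulEquiv.subgroupCongr range_cubeRotationRep).symm.trans
    (MonoidHom.ofInjective cubeRotationRep_injective).symm⟩
end

section
/- The matrix P = ρ·τ₂ lies in the subgroup G = ⟨τ₁, δ, ρ⟩ of GL(3,ℝ), and the centralizer of P in G equals the cyclic subgroup generated by P; in particular the centralizer C_G(P) is isomorphic to ℤ/4ℤ. -/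
open Matrix

/-- The matrix `P = ρ·τ₂`. -/
noncomputable def P : GL (Fin 3) ℝ := ρ * τ₂


/-!
All four matrices τ₁, δ, ρ, τ₂ have integer entries and determinant 1, so ⟨τ₁, δ, ρ⟩ sits inside
the image of `SL(3, ℤ)` in `GL(3, ℝ)`, and `P` is the image of the quarter turn `Q` about `x₁`.
The centralizer of `P` in ⟨τ₁, δ, ρ⟩ is therefore controlled by the centralizer of `Q` in
`SL(3, ℤ)`. An integer matrix commuting with `Q` has the block form `diag(a, b + c J)`, with `J` the
quarter turn of the `(x₂, x₃)`-plane; its determinant `a (b² + c²) = 1` forces `a = 1` and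
`b + c i ∈ {±1, ±i}`, i.e. the matrix is one of the four powers of `Q`.
-/

namespace Matrix.SpecialLinearGroup

variable (n : Type*) [Fintype n] [DecidableEq n]

noncomputable def intToGLReal : SpecialLinearGroup n ℤ →* GL n ℝ :=
  toGL.comp (map (Int.castRingHom ℝ))

variable {n}

lemma intToGLReal_injective : Function.Injective (intToGLReal n) :=
  toGL_injective.comp map_intCast_injective

lemma coe_intToGLReal (A : SpecialLinearGroup n ℤ) :
    (intToGLReal n A : Matrix n n ℝ) = (A : Matrix n n ℤ).map (↑) :=
  rfl

end Matrix.SpecialLinearGroup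

open Matrix.SpecialLinearGroup

theorem Subgroup.centralizer_mk_eq_zpowers_of_injective {G K : Type*} [Group G] [Group K]
    {f : K →* G} (hf : Function.Injective f) {H : Subgroup G} (hH : H ≤ f.range) {q : K}
    (hq : centralizer {q} ≤ zpowers q) {p : G} (hpq : f q = p) (hp : p ∈ H) :
    centralizer {(⟨p, hp⟩ : H)} = zpowers ⟨p, hp⟩ := by
  refine le_antisymm (fun x hx => ?_) (zpowers_le.mpr (mem_centralizer_singleton_iff.mpr rfl))
  obtain ⟨a, ha⟩ := hH x.2
  have ha_comm : a ∈ centralizer {q} := by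
    refine mem_centralizer_singleton_iff.mpr (hf ?_)
    simpa [ha, hpq] using congrArg Subtype.val (mem_centralizer_singleton_iff.mp hx)
  obtain ⟨k, rfl⟩ := mem_zpowers_iff.mp (hq ha_comm)
  exact mem_zpowers_iff.mpr ⟨k, Subtype.ext (by simp [← ha, ← hpq])⟩

lemma Int.eq_of_sq_add_sq_eq_one {b c : ℤ} (h : b ^ 2 + c ^ 2 = 1) :
    (b = 1 ∧ c = 0) ∨ (b = 0 ∧ c = 1) ∨ (b = -1 ∧ c = 0) ∨ (b = 0 ∧ c = -1) := by
  obtain ⟨hb₁, hb₂⟩ : -1 ≤ b ∧ b ≤ 1 := by constructor <;> nlinarith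
  obtain ⟨hc₁, hc₂⟩ : -1 ≤ c ∧ c ≤ 1 := by constructor <;> nlinarith
  interval_cases b <;> interval_cases c <;> simp_all

def quarterTurn : SpecialLinearGroup (Fin 3) ℤ :=
  ⟨!![1,0,0; 0,0,-1; 0,1,0], by decide⟩

lemma exists_eq_of_commute_quarterTurn {M : Matrix (Fin 3) (Fin 3) ℤ}
    (hc : Commute M (quarterTurn : Matrix (Fin 3) (Fin 3) ℤ)) :
    ∃ a b c : ℤ, M = !![a, 0, 0; 0, b, -c; 0, c, b] := by
  have h (i j : Fin 3) : (M * quarterTurn) i j = (quarterTurn * M) i j := by rw [hc.eq]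
  have h01 : M 0 2 = M 0 1 := by simpa [quarterTurn, mul_apply, Fin.sum_univ_three] using h 0 1
  have h02 : -M 0 1 = M 0 2 := by simpa [quarterTurn, mul_apply, Fin.sum_univ_three] using h 0 2
  have h10 : M 1 0 = -M 2 0 := by simpa [quarterTurn, mul_apply, Fin.sum_univ_three] using h 1 0
  have h20 : M 2 0 = M 1 0 := by simpa [quarterTurn, mul_apply, Fin.sum_univ_three] using h 2 0
  have h12 : M 1 1 = M 2 2 := by simpa [quarterTurn, mul_apply, Fin.sum_univ_three] using h 1 2
  have h22 : -M 2 1 = M 1 2 := by simpa [quarterTurn, mul_apply, Fin.sum_univ_three] using h 2 2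
  refine ⟨M 0 0, M 1 1, M 2 1, ?_⟩
  ext i j
  fin_cases i <;> fin_cases j <;>
    simp only [Fin.zero_eta, Fin.mk_one, Fin.reduceFinMk, Fin.isValue, of_apply, cons_val',
      cons_val, cons_val_zero, cons_val_one, cons_val_fin_one] <;>
    linarith

lemma centralizer_quarterTurn_le_zpowers :
    Subgroup.centralizer {quarterTurn} ≤ Subgroup.zpowers quarterTurn := by
  intro A hA
  have hc : Commute (A : Matrix (Fin 3) (Fin 3) ℤ) quarterTurn := by
    have hAQ := Subgroup.mem_centralizer_singleton_iff.mp hA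
    exact congrArg Subtype.val hAQ
  obtain ⟨a, b, c, hform⟩ := exists_eq_of_commute_quarterTurn hc
  have hdet : a * (b ^ 2 + c ^ 2) = 1 := by
    rw [← A.2, hform]
    simp only [det_fin_three, Fin.isValue, of_apply, cons_val', cons_val, cons_val_zero,
      cons_val_one, cons_val_fin_one]
    ring
  have hbc := Int.eq_one_of_mul_eq_one_left (by positivity) hdet
  have ha : a = 1 := by simpa [hbc] using hdet
  suffices ∃ k : ℕ, (quarterTurn : Matrix (Fin 3) (Fin 3) ℤ) ^ k = A by
    obtain ⟨k, hk⟩ := this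
    exact ⟨k, Subtype.ext (by simpa using hk)⟩
  rcases Int.eq_of_sq_add_sq_eq_one hbc with ⟨rfl, rfl⟩ | ⟨rfl, rfl⟩ | ⟨rfl, rfl⟩ | ⟨rfl, rfl⟩
  · exact ⟨0, by rw [hform, ha]; decide⟩
  · exact ⟨1, by rw [hform, ha]; decide⟩
  · exact ⟨2, by rw [hform, ha]; decide⟩
  · exact ⟨3, by rw [hform, ha]; decide⟩

lemma orderOf_quarterTurn : orderOf quarterTurn = 4 :=
  orderOf_eq_prime_pow (p := 2) (n := 1) (by decide) (by decide)

def δInt : SpecialLinearGroup (Fin 3) ℤ := ⟨!![0,1,0; 0,0,-1; -1,0,0], by decide⟩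
def τ₁Int : SpecialLinearGroup (Fin 3) ℤ := ⟨!![1,0,0; 0,-1,0; 0,0,-1], by decide⟩
def τ₂Int : SpecialLinearGroup (Fin 3) ℤ := ⟨!![-1,0,0; 0,1,0; 0,0,-1], by decide⟩
def ρInt : SpecialLinearGroup (Fin 3) ℤ := ⟨!![-1,0,0; 0,0,1; 0,1,0], by decide⟩

lemma intToGLReal_δInt : intToGLReal (Fin 3) δInt = δ :=
  Units.ext <| by rw [coe_intToGLReal]; ext i j; fin_cases i <;> fin_cases j <;> simp [δ, δInt]

lemma intToGLReal_τ₁Int : intToGLReal (Fin 3) τ₁Int = τ₁ :=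
  Units.ext <| by rw [coe_intToGLReal]; ext i j; fin_cases i <;> fin_cases j <;> simp [τ₁, τ₁Int]

lemma intToGLReal_τ₂Int : intToGLReal (Fin 3) τ₂Int = τ₂ :=
  Units.ext <| by rw [coe_intToGLReal]; ext i j; fin_cases i <;> fin_cases j <;> simp [τ₂, τ₂Int]

lemma intToGLReal_ρInt : intToGLReal (Fin 3) ρInt = ρ :=
  Units.ext <| by rw [coe_intToGLReal]; ext i j; fin_cases i <;> fin_cases j <;> simp [ρ, ρInt]

lemma intToGLReal_quarterTurn : intToGLReal (Fin 3) quarterTurn = P := by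
  rw [P, ← intToGLReal_ρInt, ← intToGLReal_τ₂Int, ← map_mul]
  congr 1
  decide

lemma closure_le_range_intToGLReal :
    Subgroup.closure {τ₁, δ, ρ} ≤ (intToGLReal (Fin 3)).range := by
  rw [Subgroup.closure_le]
  rintro g (rfl | rfl | rfl)
  exacts [⟨τ₁Int, intToGLReal_τ₁Int⟩, ⟨δInt, intToGLReal_δInt⟩, ⟨ρInt, intToGLReal_ρInt⟩]

lemma τ₂_eq : τ₂ = δ * δ * τ₁ * δ := by
  rw [← intToGLReal_τ₂Int, ← intToGLReal_δInt, ← intToGLReal_τ₁Int, ← map_mul, ← map_mul,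
    ← map_mul]
  congr 1
  decide

lemma P_mem_closure : P ∈ Subgroup.closure {τ₁, δ, ρ} := by
  have hτ₁ : τ₁ ∈ Subgroup.closure {τ₁, δ, ρ} := Subgroup.subset_closure (by simp)
  have hδ : δ ∈ Subgroup.closure {τ₁, δ, ρ} := Subgroup.subset_closure (by simp)
  have hρ : ρ ∈ Subgroup.closure {τ₁, δ, ρ} := Subgroup.subset_closure (by simp)
  rw [P, τ₂_eq]
  exact mul_mem hρ (mul_mem (mul_mem (mul_mem hδ hδ) hτ₁) hδ)

/-- `P = ρ·τ₂` lies in `G = ⟨τ₁, δ, ρ⟩`, its centralizer in `G` is the cyclic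
subgroup it generates, and this centralizer is isomorphic to ℤ/4ℤ. -/
theorem centralizer_P_in_S4_eq_zpowers :
    ∃ hP : P ∈ (Subgroup.closure {τ₁, δ, ρ} : Subgroup (GL (Fin 3) ℝ)),
      Subgroup.centralizer {(⟨P, hP⟩ : Subgroup.closure {τ₁, δ, ρ})} =
        Subgroup.zpowers (⟨P, hP⟩ : Subgroup.closure {τ₁, δ, ρ}) ∧
      Nonempty ((Subgroup.centralizer {(⟨P, hP⟩ : Subgroup.closure {τ₁, δ, ρ})})
        ≃* Multiplicative (ZMod 4)) := by
  have hcen := Subgroup.centralizer_mk_eq_zpowers_of_injective intToGLReal_injective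
    closure_le_range_intToGLReal centralizer_quarterTurn_le_zpowers intToGLReal_quarterTurn
    P_mem_closure
  have hord : orderOf (⟨P, P_mem_closure⟩ : Subgroup.closure {τ₁, δ, ρ}) = 4 := by
    rw [Subgroup.orderOf_mk, ← intToGLReal_quarterTurn,
      orderOf_injective _ intToGLReal_injective, orderOf_quarterTurn]
  refine ⟨P_mem_closure, hcen, ⟨?_⟩⟩
  rw [hcen, ← hord, ← Nat.card_zpowers]
  exact (zmodCyclicMulEquiv inferInstance).symm
end
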